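/- arXiv:2105.01045 — 2 statements merged into one kernel-verified Lean document; each statement's English description precedes it below -/
import Mathlib

section
/- Let n ≥ 1 be an integer and let f : [0,1] → [0,∞) be a non-increasing probability density function (∫₀¹ f(t) dt = 1). Define rectangle areas A(0,0) = f(1) and, for integers k ≥ 1 and a ∈ {0, 1, …, 2^(k−1) − 1}, A(k,a) = 2^(−k)·( f(2^(−k)(2a+1)) − f(2^(−k+1)(a+1)) ). For each such pair (k,a) let N_{k,a} be a Binomial(n, A(k,a)) random variable. Then Σ over all pairs (k,a) (including (0,0)) of [ (L_s(k) + L_s(a)) · P(N_{k,a} ≥ 1) + E[ (⌊2·log₂ N_{k,a} + 1⌋) · 1{N_{k,a} ≥ 1} ] ] ≤ 92·√(n·f(0))·log₂(√(n·f(0)) + 1). -/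
open MeasureTheory

/-- The Elias gamma codeword length of a positive integer `m`:
`L_γ(m) = ⌊2·log₂ m + 1⌋`. -/
noncomputable def eliasGammaLen (m : ℕ) : ℝ :=
  ((⌊2 * Real.logb 2 (m : ℝ) + 1⌋ : ℤ) : ℝ)

/-- The shifted Elias gamma codeword length of a nonnegative integer `m`:
`L_s(m) = L_γ(m+1) = ⌊2·log₂(m+1) + 1⌋`. -/
noncomputable def shiftedEliasGammaLen (m : ℕ) : ℝ := eliasGammaLen (m + 1)

/-- The contribution of one dyadic rectangle with area (probability) `p` to the
expected codeword length, where `Lk` and `La` are the lengths of the shifted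
Elias gamma codes of its indices `k` and `a`, and `N ~ Binomial(n, p)`:
`(Lk + La)·P(N ≥ 1) + E[⌊2·log₂ N + 1⌋·1{N ≥ 1}]`. -/
noncomputable def rectCost (n : ℕ) (Lk La p : ℝ) : ℝ :=
  (Lk + La) * (1 - (1 - p) ^ n) +
    ∑ m ∈ Finset.Icc 1 n, (n.choose m : ℝ) * p ^ m * (1 - p) ^ (n - m) * eliasGammaLen m

/-!
A rectangle of area `p` costs at most `(L_s(k) + L_s(a) + 2 log₂ n + 1) · min 1 (n p)`:
every count `N ≤ n` has a codeword of length `≤ 2 log₂ n + 1`, and `P(N ≥ 1) ≤ min 1 (n p)`.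
Since `f` is non-increasing, the `2^k` rectangles of level `k + 1` have total area at most
`f(0) / 2^(k+1)` (their heights telescope), so that level costs `O(k + log n)` times
`min (2^k) (n f(0) / 2^(k+1))`. Below the level `K` with `2^K ≈ √(n f(0))` the count `2^k`
is the better bound, above it the geometrically decaying mass, and both halves sum to
`O(√(n f(0)) · log √(n f(0)))`. Finally `log n ≤ log (n f(0))` because `f(0) ≥ 1` for a
non-increasing density on `[0,1]`.
-/

open Real Finset

lemma eliasGammaLen_nonneg {m : ℕ} (hm : 1 ≤ m) : 0 ≤ eliasGammaLen m := by
  unfold eliasGammaLen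
  have : (0 : ℝ) ≤ logb 2 m := logb_nonneg one_lt_two (by exact_mod_cast hm)
  have : (0 : ℤ) ≤ ⌊2 * logb 2 m + 1⌋ := Int.floor_nonneg.2 (by linarith)
  exact_mod_cast this

lemma eliasGammaLen_le {m M : ℕ} (hm : 1 ≤ m) (hM : m ≤ M) :
    eliasGammaLen m ≤ 2 * logb 2 M + 1 := by
  have : logb 2 m ≤ logb 2 M :=
    logb_le_logb_of_le one_lt_two (by exact_mod_cast hm) (by exact_mod_cast hM)
  exact (Int.floor_le _).trans (by linarith)

lemma shiftedEliasGammaLen_nonneg (m : ℕ) : 0 ≤ shiftedEliasGammaLen m :=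
  eliasGammaLen_nonneg m.succ_pos

lemma shiftedEliasGammaLen_zero : shiftedEliasGammaLen 0 = 1 := by
  norm_num [shiftedEliasGammaLen, eliasGammaLen]

lemma shiftedEliasGammaLen_le {m K : ℕ} (h : m < 2 ^ K) :
    shiftedEliasGammaLen m ≤ 2 * K + 1 := by
  have := eliasGammaLen_le (Nat.le_add_left 1 m) h
  rwa [Nat.cast_pow, Nat.cast_ofNat, logb_pow, logb_self_eq_one one_lt_two, mul_one] at this

lemma logb_two_natCast_nonneg (n : ℕ) : 0 ≤ logb 2 n :=
  div_nonneg (log_natCast_nonneg n) (log_nonneg one_le_two)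

lemma sum_Icc_one_binomial (n : ℕ) (p : ℝ) :
    ∑ m ∈ Icc 1 n, (n.choose m : ℝ) * p ^ m * (1 - p) ^ (n - m) = 1 - (1 - p) ^ n := by
  have h := (add_pow p (1 - p) n).symm
  rw [add_sub_cancel, one_pow, Nat.range_succ_eq_Icc_zero,
    ← insert_Icc_add_one_left_eq_Icc n.zero_le, sum_insert (by simp)] at h
  simp only [pow_zero, one_mul, Nat.sub_zero, Nat.choose_zero_right, Nat.cast_one,
    mul_one, zero_add] at h
  have hcomm : ∑ m ∈ Icc 1 n, (n.choose m : ℝ) * p ^ m * (1 - p) ^ (n - m) =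
      ∑ m ∈ Icc 1 n, p ^ m * (1 - p) ^ (n - m) * n.choose m :=
    sum_congr rfl fun m _ => by ring
  linarith

lemma one_sub_one_sub_pow_le_min (n : ℕ) {p : ℝ} (hp1 : p ≤ 1) :
    1 - (1 - p) ^ n ≤ min 1 (n * p) := by
  have hbern := one_add_mul_le_pow (a := -p) (by linarith) n
  rw [← sub_eq_add_neg] at hbern
  exact le_min (by linarith [pow_nonneg (sub_nonneg.2 hp1) n]) (by linarith)

lemma rectCost_nonneg (n : ℕ) {Lk La p : ℝ} (hLk : 0 ≤ Lk) (hLa : 0 ≤ La)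
    (hp0 : 0 ≤ p) (hp1 : p ≤ 1) : 0 ≤ rectCost n Lk La p := by
  have hq : 0 ≤ 1 - p := sub_nonneg.2 hp1
  refine add_nonneg (mul_nonneg (by positivity) ?_) (sum_nonneg fun m hm => ?_)
  · linarith [pow_le_one₀ hq (by linarith : 1 - p ≤ 1) (n := n)]
  · exact mul_nonneg (by positivity) (eliasGammaLen_nonneg (mem_Icc.1 hm).1)

/-- Every codeword for a count `1 ≤ m ≤ n` has length at most `2 log₂ n + 1`, and
`P(N ≥ 1) ≤ min 1 (n p)` by the union bound. -/
lemma rectCost_le (n : ℕ) {Lk La p : ℝ} (hLk : 0 ≤ Lk) (hLa : 0 ≤ La)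
    (hp0 : 0 ≤ p) (hp1 : p ≤ 1) :
    rectCost n Lk La p ≤ (Lk + La + 2 * logb 2 n + 1) * min 1 (n * p) := by
  have hcount : ∑ m ∈ Icc 1 n, (n.choose m : ℝ) * p ^ m * (1 - p) ^ (n - m) * eliasGammaLen m
      ≤ (2 * logb 2 n + 1) * (1 - (1 - p) ^ n) := by
    rw [← sum_Icc_one_binomial, mul_sum]
    refine sum_le_sum fun m hm => ?_
    rw [mul_comm (2 * logb 2 n + 1)]
    exact mul_le_mul_of_nonneg_left (eliasGammaLen_le (mem_Icc.1 hm).1 (mem_Icc.1 hm).2)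
      (by positivity)
  have hmin := one_sub_one_sub_pow_le_min n hp1
  have hlog := logb_two_natCast_nonneg n
  calc rectCost n Lk La p
      ≤ (Lk + La) * (1 - (1 - p) ^ n) + (2 * logb 2 n + 1) * (1 - (1 - p) ^ n) :=
        add_le_add_right hcount _
    _ = (Lk + La + 2 * logb 2 n + 1) * (1 - (1 - p) ^ n) := by ring
    _ ≤ (Lk + La + 2 * logb 2 n + 1) * min 1 (n * p) :=
        mul_le_mul_of_nonneg_left hmin (by linarith)

section AntitoneDensity

variable {f : ℝ → ℝ}

lemma AntitoneOn.mul_le_intervalIntegral {b x : ℝ} (hf : AntitoneOn f (Set.Icc 0 b))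
    (hx0 : 0 ≤ x) (hxb : x ≤ b) : x * f x ≤ ∫ t in (0 : ℝ)..x, f t := by
  have hfx : AntitoneOn f (Set.uIcc 0 x) := by
    rw [Set.uIcc_of_le hx0]
    exact hf.mono (Set.Icc_subset_Icc_right hxb)
  have := intervalIntegral.integral_mono_on hx0 (intervalIntegrable_const (μ := volume))
    hfx.intervalIntegrable fun t ht => hf ⟨ht.1, ht.2.trans hxb⟩ ⟨hx0, hxb⟩ ht.2
  simpa using this

lemma AntitoneOn.intervalIntegral_le_mul {b : ℝ} (hf : AntitoneOn f (Set.Icc 0 b))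
    (hb : 0 ≤ b) : ∫ t in (0 : ℝ)..b, f t ≤ b * f 0 := by
  have hfb : AntitoneOn f (Set.uIcc 0 b) := by rwa [Set.uIcc_of_le hb]
  have := intervalIntegral.integral_mono_on hb hfb.intervalIntegrable
    (intervalIntegrable_const (μ := volume)) fun t ht => hf ⟨le_rfl, hb⟩ ht ht.1
  simpa using this

lemma AntitoneOn.one_le_apply_zero_of_integral_eq_one (hf : AntitoneOn f (Set.Icc 0 1))
    (hf_pdf : ∫ t in (0 : ℝ)..1, f t = 1) : 1 ≤ f 0 := by
  simpa [hf_pdf] using hf.intervalIntegral_le_mul zero_le_one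

lemma AntitoneOn.mul_apply_le_one_of_integral_eq_one
    (hf_nonneg : ∀ x ∈ Set.Icc (0 : ℝ) 1, 0 ≤ f x) (hf : AntitoneOn f (Set.Icc 0 1))
    (hf_pdf : ∫ t in (0 : ℝ)..1, f t = 1)
    {x : ℝ} (hx0 : 0 ≤ x) (hx1 : x ≤ 1) : x * f x ≤ 1 := by
  have hint : IntervalIntegrable f volume 0 1 :=
    (show AntitoneOn f (Set.uIcc 0 1) by rwa [Set.uIcc_of_le zero_le_one]).intervalIntegrable
  have hnonneg : ∀ᵐ t ∂volume.restrict (Set.Ioc (0 : ℝ) 1), 0 ≤ f t :=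
    (ae_restrict_iff' measurableSet_Ioc).2
      (Filter.Eventually.of_forall fun t ht => hf_nonneg t (Set.Ioc_subset_Icc_self ht))
  calc x * f x ≤ ∫ t in (0 : ℝ)..x, f t := hf.mul_le_intervalIntegral hx0 hx1
    _ ≤ ∫ t in (0 : ℝ)..1, f t :=
        intervalIntegral.integral_mono_interval le_rfl hx0 hx1 hnonneg hint
    _ = 1 := hf_pdf

end AntitoneDensity

/-- The area `A(k + 1, a)` of the paper (the levels `k ≥ 1` are shifted down by one). -/
noncomputable def dyadicArea (f : ℝ → ℝ) (k a : ℕ) : ℝ :=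
  (f ((2 * (a : ℝ) + 1) / 2 ^ (k + 1)) - f (((a : ℝ) + 1) / 2 ^ k)) / 2 ^ (k + 1)

section DyadicArea

variable {f : ℝ → ℝ}

lemma dyadicArea_eq (k a : ℕ) :
    dyadicArea f k a =
      (f ((2 * a + 1 : ℕ) / 2 ^ (k + 1)) - f ((2 * a + 2 : ℕ) / 2 ^ (k + 1))) /
        2 ^ (k + 1) := by
  unfold dyadicArea
  congr 3
  · push_cast
    ring
  · push_cast
    field_simp
    ring

lemma natCast_div_two_pow_mem_Icc {j m : ℕ} (h : j ≤ 2 ^ m) :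
    (j : ℝ) / 2 ^ m ∈ Set.Icc (0 : ℝ) 1 :=
  ⟨by positivity, div_le_one_of_le₀ (by exact_mod_cast h) (by positivity)⟩

lemma AntitoneOn.apply_natCast_div_two_pow_le (hf : AntitoneOn f (Set.Icc 0 1)) {i j m : ℕ}
    (hij : i ≤ j) (hj : j ≤ 2 ^ m) : f (j / 2 ^ m) ≤ f (i / 2 ^ m) :=
  hf (natCast_div_two_pow_mem_Icc (hij.trans hj)) (natCast_div_two_pow_mem_Icc hj)
    (by gcongr)

lemma dyadicArea_nonneg (hf : AntitoneOn f (Set.Icc 0 1)) {k a : ℕ} (ha : a < 2 ^ k) :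
    0 ≤ dyadicArea f k a := by
  rw [dyadicArea_eq]
  exact div_nonneg (sub_nonneg.2 (hf.apply_natCast_div_two_pow_le (by omega)
    (by rw [pow_succ]; omega))) (by positivity)

/-- The area is at most `f(x) / 2^(k+1) ≤ x f(x)` at the left corner `x` of the rectangle. -/
lemma dyadicArea_le_one (hf_nonneg : ∀ x ∈ Set.Icc (0 : ℝ) 1, 0 ≤ f x)
    (hf : AntitoneOn f (Set.Icc 0 1)) (hf_pdf : ∫ t in (0 : ℝ)..1, f t = 1)
    {k a : ℕ} (ha : a < 2 ^ k) : dyadicArea f k a ≤ 1 := by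
  have hx := natCast_div_two_pow_mem_Icc (show 2 * a + 1 ≤ 2 ^ (k + 1) by rw [pow_succ]; omega)
  have hy := natCast_div_two_pow_mem_Icc (show 2 * a + 2 ≤ 2 ^ (k + 1) by rw [pow_succ]; omega)
  set x : ℝ := (2 * a + 1 : ℕ) / 2 ^ (k + 1)
  have hcorner : 1 / 2 ^ (k + 1) ≤ x :=
    div_le_div_of_nonneg_right (by exact_mod_cast Nat.le_add_left 1 (2 * a))
      (by positivity)
  rw [dyadicArea_eq]
  calc (f x - f ((2 * a + 2 : ℕ) / 2 ^ (k + 1))) / 2 ^ (k + 1)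
      ≤ 1 / 2 ^ (k + 1) * f x := by
        rw [one_div_mul_eq_div]
        gcongr
        exact sub_le_self _ (hf_nonneg _ hy)
    _ ≤ x * f x := mul_le_mul_of_nonneg_right hcorner (hf_nonneg x hx)
    _ ≤ 1 := hf.mul_apply_le_one_of_integral_eq_one hf_nonneg hf_pdf hx.1 hx.2

/-- The rectangles of one level telescope, up to the gaps between them, to `f 0 - f 1`. -/
lemma sum_dyadicArea_le (hf_one : 0 ≤ f 1) (hf : AntitoneOn f (Set.Icc 0 1)) (k : ℕ) :
    ∑ a ∈ range (2 ^ k), dyadicArea f k a ≤ f 0 / 2 ^ (k + 1) := by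
  set g : ℕ → ℝ := fun j => f (j / 2 ^ (k + 1))
  have hgap : ∀ a ∈ range (2 ^ k), g (2 * a + 1) - g (2 * a + 2) ≤
      g (2 * a) - g (2 * (a + 1)) := fun a ha => by
    have := hf.apply_natCast_div_two_pow_le (m := k + 1) (Nat.le_succ (2 * a))
      (by rw [pow_succ]; have := mem_range.1 ha; omega)
    simp only [g, mul_add, mul_one]
    linarith
  have htelescope := sum_range_sub' (fun a => g (2 * a)) (2 ^ k)
  have hg0 : g (2 * 0) = f 0 := by simp [g]
  have hg1 : g (2 * 2 ^ k) = f 1 := by simp [g, pow_succ, mul_comm]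
  simp only [dyadicArea_eq, ← sum_div]
  gcongr
  calc ∑ a ∈ range (2 ^ k), (g (2 * a + 1) - g (2 * a + 2))
      ≤ ∑ a ∈ range (2 ^ k), (g (2 * a) - g (2 * (a + 1))) := sum_le_sum hgap
    _ = f 0 - f 1 := by rw [htelescope, hg0, hg1]
    _ ≤ f 0 := sub_le_self _ hf_one

end DyadicArea

/-- `4k + c` bounds the cost coefficient of a rectangle of level `k`, `2^k` their number, and
`T / 2^(k+1)` (with `T = n f(0)`) `n` times their total area. -/
noncomputable def levelBound (c T : ℝ) (k : ℕ) : ℝ :=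
  (4 * k + c) * min (2 ^ k) (T / 2 ^ (k + 1))

lemma sum_rectCost_dyadicArea_le {f : ℝ → ℝ}
    (hf_nonneg : ∀ x ∈ Set.Icc (0 : ℝ) 1, 0 ≤ f x) (hf : AntitoneOn f (Set.Icc 0 1))
    (hf_pdf : ∫ t in (0 : ℝ)..1, f t = 1) (n k : ℕ) :
    ∑ a ∈ range (2 ^ k),
        rectCost n (shiftedEliasGammaLen (k + 1)) (shiftedEliasGammaLen a) (dyadicArea f k a)
      ≤ levelBound (2 * logb 2 n + 5) (n * f 0) k := by
  have hterm : ∀ a ∈ range (2 ^ k),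
      rectCost n (shiftedEliasGammaLen (k + 1)) (shiftedEliasGammaLen a) (dyadicArea f k a)
        ≤ (4 * k + (2 * logb 2 n + 5)) * min 1 (n * dyadicArea f k a) := fun a ha => by
    have ha := mem_range.1 ha
    have hk := shiftedEliasGammaLen_le (Nat.lt_two_pow_self (n := k + 1))
    have ha' := shiftedEliasGammaLen_le ha
    push_cast at hk
    refine (rectCost_le n (shiftedEliasGammaLen_nonneg _) (shiftedEliasGammaLen_nonneg _)
      (dyadicArea_nonneg hf ha) (dyadicArea_le_one hf_nonneg hf hf_pdf ha)).trans ?_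
    exact mul_le_mul_of_nonneg_right (by linarith) (le_min zero_le_one
      (mul_nonneg n.cast_nonneg (dyadicArea_nonneg hf ha)))
  have hcount : ∑ a ∈ range (2 ^ k), min 1 (n * dyadicArea f k a) ≤ (2 : ℝ) ^ k :=
    (sum_le_sum fun a _ => min_le_left _ _).trans (by simp)
  have hmass : ∑ a ∈ range (2 ^ k), min 1 (n * dyadicArea f k a) ≤ n * f 0 / 2 ^ (k + 1) := by
    refine (sum_le_sum fun a _ => min_le_right _ _).trans ?_
    rw [← mul_sum, mul_div_assoc]
    exact mul_le_mul_of_nonneg_left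
      (sum_dyadicArea_le (hf_nonneg 1 ⟨zero_le_one, le_rfl⟩) hf k) n.cast_nonneg
  have hc : 0 ≤ 4 * (k : ℝ) + (2 * logb 2 n + 5) := by
    have := logb_two_natCast_nonneg n
    positivity
  calc _ ≤ ∑ a ∈ range (2 ^ k), (4 * k + (2 * logb 2 n + 5)) * min 1 (n * dyadicArea f k a) :=
        sum_le_sum hterm
    _ ≤ _ := by
        rw [← mul_sum]
        exact mul_le_mul_of_nonneg_left (le_min hcount hmass) hc

section LevelBound

variable {c T : ℝ}

lemma levelBound_nonneg (hc : 0 ≤ c) (hT : 0 ≤ T) (k : ℕ) : 0 ≤ levelBound c T k :=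
  mul_nonneg (by positivity) (le_min (by positivity) (by positivity))

lemma sum_range_levelBound_le (hc : 0 ≤ c) (K : ℕ) :
    ∑ k ∈ range K, levelBound c T k ≤ (4 * K + c) * 2 ^ K := by
  calc ∑ k ∈ range K, levelBound c T k ≤ ∑ k ∈ range K, (4 * K + c) * (2 : ℝ) ^ k := by
        refine sum_le_sum fun k hk => ?_
        have hkK : (k : ℝ) ≤ K := by exact_mod_cast (mem_range.1 hk).le
        calc levelBound c T k ≤ (4 * k + c) * 2 ^ k :=
              mul_le_mul_of_nonneg_left (min_le_left _ _) (by positivity)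
          _ ≤ (4 * K + c) * 2 ^ k := by gcongr
    _ ≤ (4 * K + c) * 2 ^ K := by
        rw [← mul_sum]
        gcongr
        have := geom_sum_eq (x := (2 : ℝ)) (by norm_num) K
        norm_num at this
        linarith

lemma hasSum_affine_mul_geometric_half (α β : ℝ) :
    HasSum (fun j : ℕ => (α * j + β) * (1 / 2 : ℝ) ^ j) (2 * α + 2 * β) := by
  have h1 := hasSum_coe_mul_geometric_of_norm_lt_one (𝕜 := ℝ) (r := 1 / 2) (by norm_num)
  rw [show (1 / 2 : ℝ) / (1 - 1 / 2) ^ 2 = 2 by norm_num] at h1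
  have h := (h1.mul_left α).add (hasSum_geometric_two.mul_left β)
  rw [mul_comm α, mul_comm β] at h
  exact h.congr_fun fun j => by ring

lemma levelBound_add_le (hc : 0 ≤ c) (K j : ℕ) :
    levelBound c T (j + K) ≤ T / 2 ^ (K + 1) * ((4 * j + (4 * K + c)) * (1 / 2 : ℝ) ^ j) := by
  calc levelBound c T (j + K) ≤ (4 * (j + K : ℕ) + c) * (T / 2 ^ (j + K + 1)) :=
        mul_le_mul_of_nonneg_left (min_le_right _ _) (by positivity)
    _ = _ := by
        rw [pow_add, pow_add, one_div_pow]
        push_cast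
        field_simp
        ring

lemma summable_levelBound (hc : 0 ≤ c) (hT : 0 ≤ T) : Summable (levelBound c T) :=
  (summable_nat_add_iff 0).1 <| Summable.of_nonneg_of_le (fun _ => levelBound_nonneg hc hT _)
    (levelBound_add_le hc 0) ((hasSum_affine_mul_geometric_half _ _).summable.mul_left _)

lemma tsum_levelBound_le (hc : 0 ≤ c) (hT : 0 ≤ T) (K : ℕ) :
    ∑' k, levelBound c T k ≤ (4 * K + c) * 2 ^ K + T / 2 ^ K * (4 * K + c + 4) := by
  have htail := ((hasSum_affine_mul_geometric_half 4 (4 * K + c)).mul_left (T / 2 ^ (K + 1)))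
  rw [← (summable_levelBound hc hT).sum_add_tsum_nat_add K]
  refine add_le_add (sum_range_levelBound_le hc K) ?_
  refine (Summable.tsum_le_tsum (levelBound_add_le hc K)
    ((summable_nat_add_iff K).2 (summable_levelBound hc hT)) htail.summable).trans_eq ?_
  rw [htail.tsum_eq, pow_succ]
  field_simp
  ring

/-- Cutting the series at the level `K` with `2^K ≈ √T` balances head and tail. -/
lemma tsum_levelBound_le_sqrt (hc : 0 ≤ c) (hT : 1 ≤ T) :
    ∑' k, levelBound c T k ≤ √T * (12 * logb 2 √T + 3 * c + 16) := by
  set S := √T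
  have hS : 1 ≤ S := Real.one_le_sqrt.2 hT
  obtain ⟨m, hmS, hSm⟩ := exists_nat_pow_near hS one_lt_two
  have hK : (m + 1 : ℕ) ≤ logb 2 S + 1 := by
    have := logb_le_logb_of_le one_lt_two (by positivity) hmS
    rw [logb_pow, logb_self_eq_one one_lt_two] at this
    push_cast
    linarith
  have hTK : T / 2 ^ (m + 1) ≤ S := by
    rw [div_le_iff₀ (by positivity), ← Real.mul_self_sqrt (by linarith : 0 ≤ T)]
    exact mul_le_mul_of_nonneg_left hSm.le (by positivity)
  have h2K : (2 : ℝ) ^ (m + 1) ≤ 2 * S := by rw [pow_succ, mul_comm]; gcongr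
  refine (tsum_levelBound_le hc (by linarith) (m + 1)).trans ?_
  have hcoef : 0 ≤ 4 * ((m + 1 : ℕ) : ℝ) + c := by positivity
  nlinarith [mul_le_mul_of_nonneg_left h2K hcoef,
    mul_le_mul_of_nonneg_right hTK (by linarith : 0 ≤ 4 * ((m + 1 : ℕ) : ℝ) + c + 4)]

end LevelBound

lemma tsum_sum_rectCost_dyadicArea_le {f : ℝ → ℝ}
    (hf_nonneg : ∀ x ∈ Set.Icc (0 : ℝ) 1, 0 ≤ f x) (hf : AntitoneOn f (Set.Icc 0 1))
    (hf_pdf : ∫ t in (0 : ℝ)..1, f t = 1) (n : ℕ) :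
    ∑' k : ℕ, ∑ a ∈ range (2 ^ k),
        rectCost n (shiftedEliasGammaLen (k + 1)) (shiftedEliasGammaLen a) (dyadicArea f k a)
      ≤ ∑' k, levelBound (2 * logb 2 n + 5) (n * f 0) k := by
  have hc : 0 ≤ 2 * logb 2 n + 5 := by linarith [logb_two_natCast_nonneg n]
  have hf0 : 0 ≤ (n : ℝ) * f 0 :=
    mul_nonneg n.cast_nonneg (hf_nonneg 0 ⟨le_rfl, zero_le_one⟩)
  have hsummable := summable_levelBound hc hf0
  have hcost_le := sum_rectCost_dyadicArea_le hf_nonneg hf hf_pdf n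
  have hcost_nonneg : ∀ k : ℕ, 0 ≤ ∑ a ∈ range (2 ^ k),
      rectCost n (shiftedEliasGammaLen (k + 1)) (shiftedEliasGammaLen a) (dyadicArea f k a) :=
    fun k => sum_nonneg fun a ha => rectCost_nonneg n (shiftedEliasGammaLen_nonneg _)
      (shiftedEliasGammaLen_nonneg _) (dyadicArea_nonneg hf (mem_range.1 ha))
      (dyadicArea_le_one hf_nonneg hf hf_pdf (mem_range.1 ha))
  exact (hsummable.of_nonneg_of_le hcost_nonneg hcost_le).tsum_le_tsum hcost_le hsummable

lemma add_sqrt_mul_le_of_le_logb {L T : ℝ} (hT : 1 ≤ T) (hLT : L ≤ logb 2 T) :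
    2 * L + 3 + √T * (12 * logb 2 √T + 3 * (2 * L + 5) + 16) ≤
      92 * √T * logb 2 (√T + 1) := by
  set S := √T
  have hS : 1 ≤ S := Real.one_le_sqrt.2 hT
  have hlogT : logb 2 T = 2 * logb 2 S := by
    rw [← Real.mul_self_sqrt (by linarith : 0 ≤ T), logb_mul (by positivity) (by positivity)]
    ring
  have hlogS : logb 2 S ≤ logb 2 (S + 1) :=
    logb_le_logb_of_le one_lt_two (by linarith) (by linarith)
  have hμ : 1 ≤ logb 2 (S + 1) := by
    have := logb_le_logb_of_le one_lt_two two_pos (by linarith : (2 : ℝ) ≤ S + 1)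
    rwa [logb_self_eq_one one_lt_two] at this
  nlinarith [mul_le_mul_of_nonneg_left hlogS (by linarith : 0 ≤ S),
    mul_le_mul_of_nonneg_left hLT (by linarith : 0 ≤ S),
    mul_le_mul_of_nonneg_right hS (by linarith : 0 ≤ logb 2 (S + 1))]

/-- For a non-increasing pdf `f` on `[0,1]`, the expected
codeword length of the dyadic decomposition scheme, i.e., the sum over all
rectangles `(k,a)` (with areas `A(0,0) = f(1)` and
`A(k,a) = 2^{-k}(f(2^{-k}(2a+1)) - f(2^{-k+1}(a+1)))` for `k ≥ 1`,
`0 ≤ a < 2^{k-1}`) of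
`(L_s(k)+L_s(a))·P(N_{k,a} ≥ 1) + E[⌊2log₂ N_{k,a}+1⌋·1{N_{k,a} ≥ 1}]`,
is at most `92·√(n·f(0))·log₂(√(n·f(0)) + 1)`. -/
theorem dyadic_expected_length_bound
    (n : ℕ) (hn : 1 ≤ n) (f : ℝ → ℝ)
    (hf_nonneg : ∀ x ∈ Set.Icc (0 : ℝ) 1, 0 ≤ f x)
    (hf_anti : AntitoneOn f (Set.Icc (0 : ℝ) 1))
    (hf_pdf : ∫ t in (0 : ℝ)..1, f t = 1) :
    rectCost n (shiftedEliasGammaLen 0) (shiftedEliasGammaLen 0) (f 1)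
      + ∑' k : ℕ, ∑ a ∈ Finset.range (2 ^ k),
          rectCost n (shiftedEliasGammaLen (k + 1)) (shiftedEliasGammaLen a)
            ((f ((2 * (a : ℝ) + 1) / 2 ^ (k + 1)) - f (((a : ℝ) + 1) / 2 ^ k)) / 2 ^ (k + 1))
      ≤ 92 * Real.sqrt (n * f 0) * Real.logb 2 (Real.sqrt (n * f 0) + 1) := by
  have hn' : (1 : ℝ) ≤ n := Nat.one_le_cast.2 hn
  have hf0 : 1 ≤ f 0 := hf_anti.one_le_apply_zero_of_integral_eq_one hf_pdf
  have hT : 1 ≤ n * f 0 := one_le_mul_of_one_le_of_one_le hn' hf0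
  have hL := logb_two_natCast_nonneg n
  have hLT : logb 2 n ≤ logb 2 (n * f 0) :=
    logb_le_logb_of_le one_lt_two (by linarith) (le_mul_of_one_le_right (by linarith) hf0)
  have hf1 : f 1 ≤ 1 := by
    simpa using hf_anti.mul_apply_le_one_of_integral_eq_one hf_nonneg hf_pdf zero_le_one le_rfl
  have htop : rectCost n (shiftedEliasGammaLen 0) (shiftedEliasGammaLen 0) (f 1) ≤
      2 * logb 2 n + 3 := by
    have := rectCost_le n zero_le_one zero_le_one (hf_nonneg 1 ⟨zero_le_one, le_rfl⟩) hf1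
    rw [shiftedEliasGammaLen_zero]
    nlinarith [min_le_left 1 (n * f 1)]
  have hseries := tsum_levelBound_le_sqrt (c := 2 * logb 2 n + 5) (by linarith) hT
  have hlevels := tsum_sum_rectCost_dyadicArea_le hf_nonneg hf_anti hf_pdf n
  exact (add_le_add htop (hlevels.trans hseries)).trans (add_sqrt_mul_le_of_le_logb hT hLT)
end

section
/- Let n ≥ 1 be an integer and c > 1, λ > 1 be reals. Let X_1, …, X_n be i.i.d. random variables taking values in the positive integers with P(X_1 > x) ≤ c·x^(−λ) for every integer x ≥ 1. Then E[ 2n · log₂( 2·max(X_1,…,X_n)/n + 1 ) ] ≤ 26·c·n^(1/λ)/min(λ − 1, 1). -/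
/-!
Since `log (1 + t) ≤ t`, the integrand is at most `(4 / log 2) · max_i X_i`, so it suffices to
bound `E[max_i X_i]`. For every level `k`, `max_i X_i ≤ k + ∑_i (X_i - k)₊`, and the tail bound
gives `E[(X_1 - k)₊] = ∑_{j ≥ k} P(X_1 > j) ≤ c (k^{-λ} + k^{1-λ} / (λ - 1))`, the sum being
compared with `∫ t^{-λ}` by telescoping. The level `k = ⌈(n c)^{1/λ}⌉` balances the two terms:
it makes `n E[(X_1 - k)₊] ≤ 1 + k / (λ - 1)`, hence `E[max_i X_i] ≤ 4 c n^{1/λ} / min (λ - 1) 1`,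
and `16 / log 2 < 26`.
-/

open MeasureTheory ProbabilityTheory
open scoped ENNReal

theorem Finset.sup'_le_add_sum_tsub {ι α : Type*} [AddCommMonoid α] [LinearOrder α]
    [IsOrderedAddMonoid α] [CanonicallyOrderedAdd α] [Sub α] [OrderedSub α]
    {s : Finset ι} (hs : s.Nonempty) (f : ι → α) (k : α) :
    s.sup' hs f ≤ k + ∑ i ∈ s, (f i - k) :=
  Finset.sup'_le hs f fun _ hi => le_add_tsub.trans <| add_le_add_right
    (Finset.single_le_sum (f := fun j => f j - k) (fun _ _ => zero_le) hi) k

theorem sub_one_mul_add_one_rpow_neg_le {lam a : ℝ} (hlam : 1 ≤ lam) (ha : 0 < a) :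
    (lam - 1) * (a + 1) ^ (-lam) ≤ a ^ (1 - lam) - (a + 1) ^ (1 - lam) := by
  have hderiv : ∀ t ∈ Set.Ioo a (a + 1),
      HasDerivAt (fun t : ℝ => t ^ (1 - lam)) ((1 - lam) * t ^ (-lam)) t := fun t ht => by
    simpa using Real.hasDerivAt_rpow_const (p := 1 - lam) (Or.inl (ha.trans ht.1).ne')
  obtain ⟨x, hx, hslope⟩ := exists_hasDerivAt_eq_slope _ _ (by linarith : a < a + 1)
    ((continuousOn_id.rpow_const fun t ht => Or.inl (ha.trans_le ht.1).ne')) hderiv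
  have hmono : (a + 1) ^ (-lam) ≤ x ^ (-lam) :=
    Real.rpow_le_rpow_of_nonpos (ha.trans hx.1) hx.2.le (by linarith)
  rw [add_sub_cancel_left, div_one, id, id] at hslope
  nlinarith [mul_le_mul_of_nonneg_left hmono (by linarith : (0 : ℝ) ≤ lam - 1)]

theorem tsum_natCast_add_rpow_neg_le {lam : ℝ} (hlam : 1 < lam) {k : ℕ} (hk : 1 ≤ k) :
    ∑' j : ℕ, ((j + k : ℕ) : ℝ) ^ (-lam) ≤ (k : ℝ) ^ (-lam) + (k : ℝ) ^ (1 - lam) / (lam - 1) := by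
  have hsum : Summable fun j : ℕ => ((j + k : ℕ) : ℝ) ^ (-lam) :=
    (summable_nat_add_iff k).2 (Real.summable_nat_rpow.2 (by linarith))
  rw [hsum.tsum_eq_zero_add, zero_add]
  gcongr
  set F : ℕ → ℝ := fun j => ((j + k : ℕ) : ℝ) ^ (1 - lam) / (lam - 1)
  have hstep : ∀ j : ℕ, ((j + 1 + k : ℕ) : ℝ) ^ (-lam) ≤ F j - F (j + 1) := fun j => by
    have h := sub_one_mul_add_one_rpow_neg_le hlam.le (by positivity : (0 : ℝ) < (j + k : ℕ))
    simp only [F, show ((j + 1 + k : ℕ) : ℝ) = (j + k : ℕ) + 1 by push_cast; ring, ← sub_div,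
      le_div_iff₀ (by linarith : 0 < lam - 1)]
    linarith
  refine Real.tsum_le_of_sum_range_le (fun j => by positivity) fun N => ?_
  calc ∑ j ∈ Finset.range N, ((j + 1 + k : ℕ) : ℝ) ^ (-lam)
      ≤ ∑ j ∈ Finset.range N, (F j - F (j + 1)) := Finset.sum_le_sum fun j _ => hstep j
    _ = F 0 - F N := Finset.sum_range_sub' F N
    _ ≤ (k : ℝ) ^ (1 - lam) / (lam - 1) := by
      have : 0 ≤ F N := div_nonneg (by positivity) (by linarith)
      simp only [F, zero_add] at this ⊢
      linarith

theorem mul_log_div_add_one_le {x y : ℝ} (hx : 0 ≤ x) (hy : 0 ≤ y) :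
    y * Real.log (x / y + 1) ≤ x := by
  rcases hy.eq_or_lt with rfl | hy
  · simpa using hx
  calc y * Real.log (x / y + 1) ≤ y * (x / y) := by
        gcongr
        linarith [Real.log_le_sub_one_of_pos (by positivity : 0 < x / y + 1)]
    _ = x := mul_div_cancel₀ x hy.ne'

theorem mul_rpow_le_mul_rpow_of_one_le {x c p : ℝ} (hx : 0 ≤ x) (hc : 1 ≤ c) (hp : p ≤ 1) :
    (x * c) ^ p ≤ c * x ^ p := by
  rw [mul_comm, Real.mul_rpow (by linarith) hx]
  gcongr
  exact Real.rpow_le_self_of_one_le hc hp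

theorem rpow_mul_add_div_sub_one_le {T k lam : ℝ} (hT : 0 < T) (hTk : T ≤ k) (hlam : 1 < lam) :
    T ^ lam * (k ^ (-lam) + k ^ (1 - lam) / (lam - 1)) ≤ 1 + T / (lam - 1) := by
  have h₁ : T ^ lam * k ^ (-lam) ≤ 1 :=
    calc T ^ lam * k ^ (-lam) ≤ T ^ lam * T ^ (-lam) := by
          gcongr T ^ lam * ?_; exact Real.rpow_le_rpow_of_nonpos hT hTk (by linarith)
      _ = 1 := by rw [← Real.rpow_add hT, add_neg_cancel, Real.rpow_zero]
  have h₂ : T ^ lam * k ^ (1 - lam) ≤ T :=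
    calc T ^ lam * k ^ (1 - lam) ≤ T ^ lam * T ^ (1 - lam) := by
          gcongr T ^ lam * ?_; exact Real.rpow_le_rpow_of_nonpos hT hTk (by linarith)
      _ = T := by rw [← Real.rpow_add hT, add_sub_cancel, Real.rpow_one]
  rw [mul_add, ← mul_div_assoc]
  gcongr

theorem add_two_add_div_sub_one_le {T S lam : ℝ} (hTS : T ≤ S) (hS : 1 ≤ S)
    (hlam : 1 < lam) : T + 2 + T / (lam - 1) ≤ 4 * S / min (lam - 1) 1 := by
  have hm : 0 < min (lam - 1) 1 := lt_min (by linarith) one_pos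
  calc T + 2 + T / (lam - 1) ≤ 3 * S + S / (lam - 1) := by gcongr; linarith
    _ ≤ 3 * S / min (lam - 1) 1 + S / min (lam - 1) 1 := by
        gcongr
        · exact le_div_self (by linarith) hm (min_le_right _ _)
        · exact min_le_left _ _
    _ = 4 * S / min (lam - 1) 1 := by ring

theorem lintegral_natCast_eq_tsum_measure_lt {Ω : Type*} [MeasurableSpace Ω] (μ : Measure Ω)
    {g : Ω → ℕ} (hg : Measurable g) :
    ∫⁻ ω, (g ω : ℝ≥0∞) ∂μ = ∑' k : ℕ, μ {ω | k < g ω} := by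
  have hcount : ∀ ω, (g ω : ℝ≥0∞) = ∑' k : ℕ, {ω' | k < g ω'}.indicator 1 ω := by
    intro ω
    rw [tsum_eq_sum (s := Finset.range (g ω)) fun k hk =>
        Set.indicator_of_notMem (by simpa using hk) _,
      Finset.sum_congr rfl fun k hk => Set.indicator_of_mem
        (show ω ∈ {ω' | k < g ω'} from Finset.mem_range.mp hk) (1 : Ω → ℝ≥0∞)]
    simp
  simp_rw [hcount]
  exact (lintegral_tsum fun k =>
      (measurable_one.indicator (hg measurableSet_Ioi)).aemeasurable).trans
    (tsum_congr fun k => lintegral_indicator_one (hg measurableSet_Ioi))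

theorem lintegral_tsub_le_of_tail_le {Ω : Type*} [MeasurableSpace Ω] (μ : Measure Ω)
    [IsFiniteMeasure μ] {Y : Ω → ℕ} (hY : Measurable Y) {c lam : ℝ} (hc : 0 ≤ c) (hlam : 1 < lam)
    (htail : ∀ x : ℕ, 1 ≤ x → (μ {ω | x < Y ω}).toReal ≤ c * (x : ℝ) ^ (-lam))
    {k : ℕ} (hk : 1 ≤ k) :
    ∫⁻ ω, ((Y ω - k : ℕ) : ℝ≥0∞) ∂μ
      ≤ ENNReal.ofReal (c * ((k : ℝ) ^ (-lam) + (k : ℝ) ^ (1 - lam) / (lam - 1))) := by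
  have hsum : Summable fun j : ℕ => c * ((j + k : ℕ) : ℝ) ^ (-lam) :=
    ((summable_nat_add_iff k).2 (Real.summable_nat_rpow.2 (by linarith))).mul_left c
  rw [lintegral_natCast_eq_tsum_measure_lt μ (g := fun ω => Y ω - k) (hY.sub measurable_const)]
  calc ∑' j : ℕ, μ {ω | j < Y ω - k}
      ≤ ∑' j : ℕ, ENNReal.ofReal (c * ((j + k : ℕ) : ℝ) ^ (-lam)) := by
        refine ENNReal.tsum_le_tsum fun j => ?_
        simp only [lt_tsub_iff_right]
        exact (ENNReal.le_ofReal_iff_toReal_le (measure_ne_top μ _) (by positivity)).2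
          (htail _ (hk.trans (Nat.le_add_left _ _)))
    _ = ENNReal.ofReal (∑' j : ℕ, c * ((j + k : ℕ) : ℝ) ^ (-lam)) :=
        (ENNReal.ofReal_tsum_of_nonneg (fun j => by positivity) hsum).symm
    _ ≤ ENNReal.ofReal (c * ((k : ℝ) ^ (-lam) + (k : ℝ) ^ (1 - lam) / (lam - 1))) := by
        rw [tsum_mul_left]
        gcongr
        exact tsum_natCast_add_rpow_neg_le hlam hk

theorem lintegral_sup'_le_add_card_mul {Ω ι : Type*} [MeasurableSpace Ω] (μ : Measure Ω)
    [IsProbabilityMeasure μ] [Fintype ι] (hι : (Finset.univ : Finset ι).Nonempty)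
    {X : ι → Ω → ℕ} {Y : Ω → ℕ} (hmeas : ∀ i, Measurable (X i))
    (hident : ∀ i, IdentDistrib (X i) Y μ μ) (k : ℕ) :
    ∫⁻ ω, ((Finset.univ.sup' hι fun i => X i ω : ℕ) : ℝ≥0∞) ∂μ
      ≤ k + Fintype.card ι * ∫⁻ ω, ((Y ω - k : ℕ) : ℝ≥0∞) ∂μ := by
  have hsame : ∀ i, ∫⁻ ω, ((X i ω - k : ℕ) : ℝ≥0∞) ∂μ = ∫⁻ ω, ((Y ω - k : ℕ) : ℝ≥0∞) ∂μ :=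
    fun i => ((hident i).comp
      (measurable_from_nat (f := fun m => ((m - k : ℕ) : ℝ≥0∞)))).lintegral_eq
  calc _ ≤ ∫⁻ ω, ((k : ℝ≥0∞) + ∑ i, ((X i ω - k : ℕ) : ℝ≥0∞)) ∂μ :=
        lintegral_mono fun ω =>
          (Nat.cast_le.2 (Finset.sup'_le_add_sum_tsub hι (fun i => X i ω) k)).trans_eq
            (by rw [Nat.cast_add, Nat.cast_sum])
    _ = k + ∑ i, ∫⁻ ω, ((X i ω - k : ℕ) : ℝ≥0∞) ∂μ := by
        rw [lintegral_add_left measurable_const, lintegral_const, measure_univ, mul_one,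
          lintegral_finsetSum _ fun i _ => by fun_prop]
    _ = k + Fintype.card ι * ∫⁻ ω, ((Y ω - k : ℕ) : ℝ≥0∞) ∂μ := by
        simp only [hsame, Finset.sum_const, Finset.card_univ, nsmul_eq_mul]

theorem lintegral_sup'_le_of_tail_le {Ω ι : Type*} [MeasurableSpace Ω] (μ : Measure Ω)
    [IsProbabilityMeasure μ] [Fintype ι] (hι : (Finset.univ : Finset ι).Nonempty)
    {X : ι → Ω → ℕ} {Y : Ω → ℕ} (hmeas : ∀ i, Measurable (X i)) (hY : Measurable Y)
    (hident : ∀ i, IdentDistrib (X i) Y μ μ) {c lam : ℝ} (hc : 0 ≤ c) (hlam : 1 < lam)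
    (htail : ∀ x : ℕ, 1 ≤ x → (μ {ω | x < Y ω}).toReal ≤ c * (x : ℝ) ^ (-lam))
    {k : ℕ} (hk : 1 ≤ k) :
    ∫⁻ ω, ((Finset.univ.sup' hι fun i => X i ω : ℕ) : ℝ≥0∞) ∂μ ≤ ENNReal.ofReal
      (k + Fintype.card ι * c * ((k : ℝ) ^ (-lam) + (k : ℝ) ^ (1 - lam) / (lam - 1))) := by
  calc _ ≤ k + Fintype.card ι * ∫⁻ ω, ((Y ω - k : ℕ) : ℝ≥0∞) ∂μ :=
        lintegral_sup'_le_add_card_mul μ hι hmeas hident k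
    _ ≤ k + Fintype.card ι *
          ENNReal.ofReal (c * ((k : ℝ) ^ (-lam) + (k : ℝ) ^ (1 - lam) / (lam - 1))) := by
        gcongr
        exact lintegral_tsub_le_of_tail_le μ hY hc hlam htail hk
    _ = _ := by
        rw [ENNReal.ofReal_add (by positivity) (by positivity), ENNReal.ofReal_natCast, mul_assoc,
          ENNReal.ofReal_mul (p := (Fintype.card ι : ℝ)) (by positivity), ENNReal.ofReal_natCast]

theorem integral_mul_logb_le_of_lintegral_le {Ω : Type*} [MeasurableSpace Ω] (μ : Measure Ω)
    {M : Ω → ℕ} (hM : Measurable M) {y B : ℝ} (hy : 0 ≤ y) (hB : 0 ≤ B)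
    (h : ∫⁻ ω, (M ω : ℝ≥0∞) ∂μ ≤ ENNReal.ofReal B) :
    ∫ ω, 2 * y * Real.logb 2 (2 * (M ω : ℝ) / y + 1) ∂μ ≤ 4 / Real.log 2 * B := by
  have hlog2 : 0 < Real.log 2 := Real.log_pos one_lt_two
  have hpoint : ∀ ω, 2 * y * Real.logb 2 (2 * (M ω : ℝ) / y + 1) ≤ 4 / Real.log 2 * M ω := by
    intro ω
    have := mul_log_div_add_one_le (by positivity : 0 ≤ 2 * (M ω : ℝ)) hy
    calc 2 * y * Real.logb 2 (2 * (M ω : ℝ) / y + 1)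
        = 2 * (y * Real.log (2 * (M ω : ℝ) / y + 1)) / Real.log 2 := by rw [Real.logb]; ring
      _ ≤ 2 * (2 * M ω) / Real.log 2 := by gcongr
      _ = 4 / Real.log 2 * M ω := by ring
  have hnonneg : ∀ ω, 0 ≤ 2 * y * Real.logb 2 (2 * (M ω : ℝ) / y + 1) := fun ω =>
    mul_nonneg (by positivity) (Real.logb_nonneg one_lt_two (by simp; positivity))
  rw [integral_eq_lintegral_of_nonneg_ae (.of_forall hnonneg)
    (Measurable.aestronglyMeasurable (by unfold Real.logb; fun_prop))]
  refine ENNReal.toReal_le_of_le_ofReal (by positivity) ?_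
  calc ∫⁻ ω, ENNReal.ofReal (2 * y * Real.logb 2 (2 * (M ω : ℝ) / y + 1)) ∂μ
      ≤ ∫⁻ ω, ENNReal.ofReal (4 / Real.log 2) * (M ω : ℝ≥0∞) ∂μ := lintegral_mono fun ω => by
        rw [← ENNReal.ofReal_natCast, ← ENNReal.ofReal_mul (by positivity)]
        exact ENNReal.ofReal_le_ofReal (hpoint ω)
    _ = ENNReal.ofReal (4 / Real.log 2) * ∫⁻ ω, (M ω : ℝ≥0∞) ∂μ :=
        lintegral_const_mul _ (by fun_prop)
    _ ≤ ENNReal.ofReal (4 / Real.log 2 * B) := by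
        rw [ENNReal.ofReal_mul (by positivity)]
        gcongr

theorem expected_ell_max_power_law_general
    {Ω : Type*} [MeasurableSpace Ω] (μ : Measure Ω) [IsProbabilityMeasure μ]
    (n : ℕ) (hn : 1 ≤ n) (c lam : ℝ) (hc : 1 < c) (hlam : 1 < lam)
    (X : Fin n → Ω → ℕ) (hmeas : ∀ i, Measurable (X i))
    (hident : ∀ i, IdentDistrib (X i) (X ⟨0, hn⟩) μ μ)
    (htail : ∀ x : ℕ, 1 ≤ x → (μ {ω | x < X ⟨0, hn⟩ ω}).toReal ≤ c * (x : ℝ) ^ (-lam)) :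
    ∫ ω, 2 * (n : ℝ) * Real.logb 2
        (2 * ((Finset.univ.sup' (Finset.univ_nonempty_iff.mpr ⟨⟨0, hn⟩⟩)
          fun i => X i ω : ℕ) : ℝ) / n + 1) ∂μ
      ≤ 26 * c * (n : ℝ) ^ (1 / lam) / min (lam - 1) 1 := by
  have hn₁ : (1 : ℝ) ≤ n := by exact_mod_cast hn
  set S := c * (n : ℝ) ^ (1 / lam) with hS
  set T := ((n : ℝ) * c) ^ (1 / lam)
  have hT : 1 ≤ T := Real.one_le_rpow (by nlinarith) (by positivity)
  have hTS : T ≤ S := mul_rpow_le_mul_rpow_of_one_le (by positivity) hc.le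
    ((div_le_one (by positivity)).2 hlam.le)
  have hTlam : T ^ lam = n * c := by
    rw [← Real.rpow_mul (by positivity), one_div_mul_cancel (by positivity), Real.rpow_one]
  have hmax : ∫⁻ ω, ((Finset.univ.sup' (Finset.univ_nonempty_iff.mpr ⟨⟨0, hn⟩⟩)
      fun i => X i ω : ℕ) : ℝ≥0∞) ∂μ ≤ ENNReal.ofReal (4 * S / min (lam - 1) 1) := by
    refine (lintegral_sup'_le_of_tail_le μ _ hmeas (hmeas _) hident (by positivity) hlam htail
      (Nat.one_le_ceil_iff.2 (by linarith : 0 < T))).trans (ENNReal.ofReal_le_ofReal ?_)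
    rw [Fintype.card_fin, ← hTlam]
    linarith [rpow_mul_add_div_sub_one_le (by linarith) (Nat.le_ceil T) hlam,
      Nat.ceil_lt_add_one (by linarith : 0 ≤ T), add_two_add_div_sub_one_le hTS (hT.trans hTS) hlam]
  calc _ ≤ 4 / Real.log 2 * (4 * S / min (lam - 1) 1) :=
        integral_mul_logb_le_of_lintegral_le μ (by fun_prop) (by positivity) (by positivity) hmax
    _ = 16 / Real.log 2 * (S / min (lam - 1) 1) := by ring
    _ ≤ 26 * (S / min (lam - 1) 1) := by
        gcongr
        rw [div_le_iff₀ (Real.log_pos one_lt_two)]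
        linarith [Real.log_two_gt_d9]
    _ = 26 * c * (n : ℝ) ^ (1 / lam) / min (lam - 1) 1 := by rw [hS]; ring

/-- If `X_1, …, X_n` are i.i.d. positive-integer valued random
variables with `P(X_1 > x) ≤ c·x^{-λ}` for every integer `x ≥ 1` (`c > 1`, `λ > 1`),
then `E[2n·log₂(2·max(X_1,…,X_n)/n + 1)] ≤ 26·c·n^{1/λ}/min(λ − 1, 1)`. -/
theorem expected_ell_max_power_law
    {Ω : Type*} [MeasurableSpace Ω] (μ : Measure Ω) [IsProbabilityMeasure μ]
    (n : ℕ) (hn : 1 ≤ n) (c lam : ℝ) (hc : 1 < c) (hlam : 1 < lam)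
    (X : Fin n → Ω → ℕ) (hmeas : ∀ i, Measurable (X i))
    (hindep : iIndepFun X μ)
    (hident : ∀ i, IdentDistrib (X i) (X ⟨0, hn⟩) μ μ)
    (hpos : ∀ i ω, 0 < X i ω)
    (htail : ∀ x : ℕ, 1 ≤ x → (μ {ω | x < X ⟨0, hn⟩ ω}).toReal ≤ c * (x : ℝ) ^ (-lam)) :
    ∫ ω, 2 * (n : ℝ) * Real.logb 2
        (2 * ((Finset.univ.sup' (Finset.univ_nonempty_iff.mpr ⟨⟨0, hn⟩⟩)
          fun i => X i ω : ℕ) : ℝ) / n + 1) ∂μ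
      ≤ 26 * c * (n : ℝ) ^ (1 / lam) / min (lam - 1) 1 :=
  expected_ell_max_power_law_general μ n hn c lam hc hlam X hmeas hident htail
end
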